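/- arXiv:2601.06630 — 3 statements merged into one kernel-verified Lean document; each statement's English description precedes it below -/
import Mathlib

section
/- If f(z) = Σ a_k z^k is analytic on the unit disk D with |f(z)| ≤ 1 for all z in D, then Σ_{k=0}^∞ |a_k| r^k ≤ 1 for all r ≤ 1/3. -/
/-!
Averaging `f` over the rotations `z ↦ ω ^ j * z` by the `n`-th roots of unity gives `g (z ^ n)`,
where `g w = ∑ a (n * m) * w ^ m` is again bounded by `1` on the disk. Composing `g` with the disk
automorphism `w ↦ (w - b) / (1 - b̄ w)`, `b = g 0`, and applying the Schwarz lemma yields the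
Schwarz–Pick bound `‖g' 0‖ ≤ 1 - ‖g 0‖ ^ 2`, that is `‖a n‖ ≤ 1 - ‖a 0‖ ^ 2` for `n ≥ 1`. Hence
`∑ ‖a k‖ r ^ k ≤ ‖a 0‖ + (1 - ‖a 0‖ ^ 2) r / (1 - r) ≤ ‖a 0‖ + (1 - ‖a 0‖ ^ 2) / 2 ≤ 1`
for `r ≤ 1 / 3`.
-/

open Metric Set Filter Topology ComplexConjugate
open scoped NNReal ENNReal

section PowerSeries

open FormalMultilinearSeries

variable {𝕜 : Type*} [RCLike 𝕜] {a : ℕ → 𝕜} {f : 𝕜 → 𝕜} {R : ℝ≥0}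

lemma le_radius_ofScalars_of_summable (h : ∀ z ∈ ball (0 : 𝕜) R, Summable fun k => a k * z ^ k) :
    (R : ℝ≥0∞) ≤ (ofScalars 𝕜 a).radius := by
  refine ENNReal.le_of_forall_nnreal_lt fun r hr => ?_
  have hr' : ((r : ℝ) : 𝕜) ∈ ball (0 : 𝕜) R := by
    simpa using (show (r : ℝ) < R by exact_mod_cast hr)
  refine (ofScalars 𝕜 a).le_radius_of_tendsto (l := 0) ?_
  simpa [ofScalars_norm] using (h _ hr').tendsto_atTop_zero.norm

lemma hasFPowerSeriesOnBall_ofScalars (hR : 0 < R)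
    (hf : ∀ z ∈ ball (0 : 𝕜) R, HasSum (fun k => a k * z ^ k) (f z)) :
    HasFPowerSeriesOnBall f (ofScalars 𝕜 a) 0 R where
  r_le := le_radius_ofScalars_of_summable fun z hz => (hf z hz).summable
  r_pos := by exact_mod_cast hR
  hasSum {y} hy := by
    simpa [ofScalars_apply_eq, mul_comm] using hf y (by simpa using hy)

lemma summable_norm_mul_pow_of_summable_on_ball
    (h : ∀ z ∈ ball (0 : 𝕜) R, Summable fun k => a k * z ^ k) {r : ℝ} (hr0 : 0 ≤ r)
    (hr : r < R) : Summable fun k => ‖a k‖ * r ^ k := by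
  lift r to ℝ≥0 using hr0
  simpa [ofScalars_norm] using (ofScalars 𝕜 a).summable_norm_mul_pow
    ((ENNReal.coe_lt_coe.mpr hr).trans_le (le_radius_ofScalars_of_summable h))

lemma apply_zero_eq_of_hasSum (hR : 0 < R)
    (hf : ∀ z ∈ ball (0 : 𝕜) R, HasSum (fun k => a k * z ^ k) (f z)) : f 0 = a 0 := by
  simpa using ((hasFPowerSeriesOnBall_ofScalars hR hf).coeff_zero fun _ => 1).symm

lemma deriv_zero_eq_of_hasSum (hR : 0 < R)
    (hf : ∀ z ∈ ball (0 : 𝕜) R, HasSum (fun k => a k * z ^ k) (f z)) : deriv f 0 = a 1 := by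
  simpa [ofScalars_apply_eq] using (hasFPowerSeriesOnBall_ofScalars hR hf).hasFPowerSeriesAt.deriv

end PowerSeries

section SchwarzPick

noncomputable def mobius (b w : ℂ) : ℂ := (w - b) / (1 - conj b * w)

lemma mobius_self (b : ℂ) : mobius b b = 0 := by simp [mobius]

lemma normSq_one_sub_conj_mul_sub_normSq_sub (b w : ℂ) :
    Complex.normSq (1 - conj b * w) - Complex.normSq (w - b) =
      (1 - Complex.normSq w) * (1 - Complex.normSq b) := by
  simp only [Complex.normSq_apply, Complex.sub_re, Complex.sub_im, Complex.mul_re,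
    Complex.mul_im, Complex.conj_re, Complex.conj_im, Complex.one_re, Complex.one_im]
  ring

lemma norm_sub_le_norm_one_sub_conj_mul {b w : ℂ} (hb : ‖b‖ ≤ 1) (hw : ‖w‖ ≤ 1) :
    ‖w - b‖ ≤ ‖1 - conj b * w‖ := by
  have key := normSq_one_sub_conj_mul_sub_normSq_sub b w
  simp only [Complex.normSq_eq_norm_sq] at key
  have : 0 ≤ (1 - ‖w‖ ^ 2) * (1 - ‖b‖ ^ 2) :=
    mul_nonneg (by nlinarith [norm_nonneg w]) (by nlinarith [norm_nonneg b])
  exact (sq_le_sq₀ (norm_nonneg _) (norm_nonneg _)).mp (by linarith)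

lemma norm_mobius_le_one {b w : ℂ} (hb : ‖b‖ ≤ 1) (hw : ‖w‖ ≤ 1) : ‖mobius b w‖ ≤ 1 := by
  rw [mobius, norm_div]
  exact div_le_one_of_le₀ (norm_sub_le_norm_one_sub_conj_mul hb hw) (norm_nonneg _)

lemma one_sub_conj_mul_ne_zero {b w : ℂ} (hb : ‖b‖ < 1) (hw : ‖w‖ ≤ 1) : 1 - conj b * w ≠ 0 := by
  refine sub_ne_zero.mpr fun h => ?_
  have : ‖conj b * w‖ < 1 := by
    rw [norm_mul, Complex.norm_conj]
    nlinarith [norm_nonneg b, norm_nonneg w]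
  simp [← h] at this

lemma hasDerivAt_mobius {b w : ℂ} (h : 1 - conj b * w ≠ 0) :
    HasDerivAt (mobius b) ((1 - conj b * b) / (1 - conj b * w) ^ 2) w := by
  refine (((hasDerivAt_id w).sub_const b).div
    (((hasDerivAt_id w).const_mul (conj b)).const_sub 1) h).congr_deriv ?_
  simp only [id, mul_one, one_mul]
  ring

lemma deriv_mobius_self {b : ℂ} (hb : ‖b‖ < 1) :
    deriv (mobius b) b = ((1 - ‖b‖ ^ 2 : ℝ) : ℂ)⁻¹ := by
  have hne := one_sub_conj_mul_ne_zero hb hb.le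
  rw [(hasDerivAt_mobius hne).deriv, sq, div_mul_cancel_left₀ hne, mul_comm, Complex.mul_conj,
    Complex.normSq_eq_norm_sq]
  push_cast
  rfl

lemma norm_deriv_zero_le_one_sub_norm_sq_of_norm_lt_one {H : ℂ → ℂ}
    (hd : DifferentiableOn ℂ H (ball 0 1)) (hb : MapsTo H (ball 0 1) (closedBall 0 1))
    (h0 : ‖H 0‖ < 1) : ‖deriv H 0‖ ≤ 1 - ‖H 0‖ ^ 2 := by
  set b := H 0
  have hbH : ∀ z ∈ ball (0 : ℂ) 1, ‖H z‖ ≤ 1 := fun z hz => by simpa using hb hz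
  have h0mem : (0 : ℂ) ∈ ball (0 : ℂ) 1 := mem_ball_self one_pos
  have hGd : DifferentiableOn ℂ (mobius b ∘ H) (ball 0 1) := fun z hz =>
    ((hasDerivAt_mobius (one_sub_conj_mul_ne_zero h0 (hbH z hz))).differentiableAt.comp z
      (hd.differentiableAt (isOpen_ball.mem_nhds hz))).differentiableWithinAt
  have hGmaps : MapsTo (mobius b ∘ H) (ball 0 1) (closedBall ((mobius b ∘ H) 0) 1) := fun z hz => by
    simpa [b, mobius_self] using norm_mobius_le_one h0.le (hbH z hz)
  have hschwarz := Complex.norm_deriv_le_one_of_mapsTo_ball hGd hGmaps one_pos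
  have hchain : deriv (mobius b ∘ H) 0 = ((1 - ‖b‖ ^ 2 : ℝ) : ℂ)⁻¹ * deriv H 0 := by
    rw [← deriv_mobius_self h0]
    exact deriv_comp 0 (hasDerivAt_mobius (one_sub_conj_mul_ne_zero h0 h0.le)).differentiableAt
      (hd.differentiableAt (isOpen_ball.mem_nhds h0mem))
  have hpos : 0 < 1 - ‖b‖ ^ 2 := by nlinarith [norm_nonneg b]
  rw [hchain, norm_mul, norm_inv, Complex.norm_real, Real.norm_of_nonneg hpos.le,
    inv_mul_le_iff₀ hpos, mul_one] at hschwarz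
  exact hschwarz

lemma norm_deriv_zero_le_one_sub_norm_sq {H : ℂ → ℂ}
    (hd : DifferentiableOn ℂ H (ball 0 1)) (hb : MapsTo H (ball 0 1) (closedBall 0 1)) :
    ‖deriv H 0‖ ≤ 1 - ‖H 0‖ ^ 2 := by
  have h0mem : (0 : ℂ) ∈ ball (0 : ℂ) 1 := mem_ball_self one_pos
  rcases (show ‖H 0‖ ≤ 1 by simpa using hb h0mem).lt_or_eq with hlt | heq
  · exact norm_deriv_zero_le_one_sub_norm_sq_of_norm_lt_one hd hb hlt
  · have hmax : IsMaxOn (norm ∘ H) (ball 0 1) 0 := fun z hz => by simpa [heq] using hb hz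
    have hconst : H =ᶠ[𝓝 0] fun _ => H 0 :=
      Filter.eventually_of_mem (isOpen_ball.mem_nhds h0mem) fun z hz =>
        Complex.eqOn_of_isPreconnected_of_isMaxOn_norm (convex_ball 0 1).isPreconnected
          isOpen_ball hd h0mem hmax hz
    simp [hconst.deriv_eq, heq]

end SchwarzPick

section Multisection

open Finset

lemma IsPrimitiveRoot.sum_pow_pow_eq_ite {K : Type*} [Field K] {ω : K} {n : ℕ}
    (hω : IsPrimitiveRoot ω n) (k : ℕ) :
    ∑ j ∈ range n, (ω ^ k) ^ j = if n ∣ k then (n : K) else 0 := by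
  split_ifs with hk
  · simp [(hω.pow_eq_one_iff_dvd k).mpr hk]
  · have hne : ω ^ k ≠ 1 := fun h => hk ((hω.pow_eq_one_iff_dvd k).mp h)
    rw [geom_sum_eq hne, ← pow_mul, mul_comm, pow_mul, hω.pow_eq_one, one_pow, sub_self, zero_div]

lemma hasSum_multisection {K : Type*} [Field K] [TopologicalSpace K] [IsTopologicalRing K]
    [CharZero K] {ω z : K} {n : ℕ} (hω : IsPrimitiveRoot ω n) (hn : n ≠ 0) {a F : ℕ → K}
    (h : ∀ j ∈ range n, HasSum (fun k => a k * (ω ^ j * z) ^ k) (F j)) :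
    HasSum (fun m => a (n * m) * (z ^ n) ^ m) ((n : K)⁻¹ * ∑ j ∈ range n, F j) := by
  have hterm : ∀ k, ∑ j ∈ range n, a k * (ω ^ j * z) ^ k =
      if n ∣ k then (n : K) * (a k * z ^ k) else 0 := fun k => by
    calc ∑ j ∈ range n, a k * (ω ^ j * z) ^ k = a k * z ^ k * ∑ j ∈ range n, (ω ^ k) ^ j := by
          rw [mul_sum]
          exact sum_congr rfl fun j _ => by ring
      _ = _ := by rw [hω.sum_pow_pow_eq_ite]; split_ifs <;> ring
  have hsum := hasSum_sum h
  simp_rw [hterm] at hsum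
  have hvanish : ∀ k ∉ Set.range (n * ·), (if n ∣ k then (n : K) * (a k * z ^ k) else 0) = 0 :=
    fun k hk => if_neg fun ⟨m, hm⟩ => hk ⟨m, hm.symm⟩
  have hsub := ((mul_right_injective₀ hn).hasSum_iff hvanish).mpr hsum
  have hn' : (n : K) ≠ 0 := Nat.cast_ne_zero.mpr hn
  simpa [Function.comp_def, pow_mul, hn'] using hsub.mul_left (n : K)⁻¹

end Multisection

section CoefficientBound

variable {a : ℕ → ℂ} {f : ℂ → ℂ}

lemma norm_coeff_one_le_one_sub_norm_sq
    (hf : ∀ z ∈ ball (0 : ℂ) 1, HasSum (fun k => a k * z ^ k) (f z))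
    (hb : ∀ z ∈ ball (0 : ℂ) 1, ‖f z‖ ≤ 1) :
    ‖a 1‖ ≤ 1 - ‖a 0‖ ^ 2 := by
  have hf' : ∀ z ∈ ball (0 : ℂ) (1 : ℝ≥0), HasSum (fun k => a k * z ^ k) (f z) := by
    simpa using hf
  have hd : DifferentiableOn ℂ f (ball 0 1) := by
    simpa only [Metric.eball_coe, NNReal.coe_one] using
      (hasFPowerSeriesOnBall_ofScalars one_pos hf').differentiableOn
  simpa [apply_zero_eq_of_hasSum one_pos hf', deriv_zero_eq_of_hasSum one_pos hf'] using
    norm_deriv_zero_le_one_sub_norm_sq hd fun z hz => by simpa using hb z hz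

lemma exists_hasSum_multisection_norm_le_one
    (hf : ∀ z ∈ ball (0 : ℂ) 1, HasSum (fun k => a k * z ^ k) (f z))
    (hb : ∀ z ∈ ball (0 : ℂ) 1, ‖f z‖ ≤ 1) {n : ℕ} (hn : n ≠ 0) {w : ℂ} (hw : w ∈ ball (0 : ℂ) 1) :
    ∃ S, HasSum (fun m => a (n * m) * w ^ m) S ∧ ‖S‖ ≤ 1 := by
  have hω := Complex.isPrimitiveRoot_exp n hn
  set ω := Complex.exp (2 * Real.pi * Complex.I / n)
  obtain ⟨z, rfl⟩ := IsAlgClosed.exists_pow_nat_eq w (Nat.pos_of_ne_zero hn)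
  have hz : ‖z‖ < 1 := by
    rwa [mem_ball_zero_iff, norm_pow, pow_lt_one_iff_of_nonneg (norm_nonneg z) hn] at hw
  have hrot : ∀ j, ω ^ j * z ∈ ball (0 : ℂ) 1 := fun j => by
    rwa [mem_ball_zero_iff, norm_mul, norm_pow, hω.norm'_eq_one hn, one_pow, one_mul]
  refine ⟨_, hasSum_multisection hω hn fun j _ => hf _ (hrot j), ?_⟩
  have hn' : (0 : ℝ) < n := Nat.cast_pos.mpr (Nat.pos_of_ne_zero hn)
  calc ‖(n : ℂ)⁻¹ * ∑ j ∈ Finset.range n, f (ω ^ j * z)‖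
      ≤ (n : ℝ)⁻¹ * ∑ j ∈ Finset.range n, ‖f (ω ^ j * z)‖ := by
        rw [norm_mul, norm_inv, Complex.norm_natCast]
        exact mul_le_mul_of_nonneg_left (norm_sum_le _ _) (by positivity)
    _ ≤ (n : ℝ)⁻¹ * n := by
        gcongr
        exact (Finset.sum_le_sum fun j _ => hb _ (hrot j)).trans_eq (by simp)
    _ = 1 := inv_mul_cancel₀ hn'.ne'

lemma norm_coeff_le_one_sub_norm_sq
    (hf : ∀ z ∈ ball (0 : ℂ) 1, HasSum (fun k => a k * z ^ k) (f z))
    (hb : ∀ z ∈ ball (0 : ℂ) 1, ‖f z‖ ≤ 1) {n : ℕ} (hn : n ≠ 0) :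
    ‖a n‖ ≤ 1 - ‖a 0‖ ^ 2 := by
  choose! T hT hTb using fun w (hw : w ∈ ball (0 : ℂ) 1) =>
    exists_hasSum_multisection_norm_le_one hf hb hn hw
  simpa using norm_coeff_one_le_one_sub_norm_sq hT hTb

end CoefficientBound

lemma tsum_mul_pow_le_of_forall_succ_le {b : ℕ → ℝ} {M r : ℝ} (hr0 : 0 ≤ r) (hr1 : r < 1)
    (hs : Summable fun k => b k * r ^ k) (hM : ∀ k, b (k + 1) ≤ M) :
    ∑' k, b k * r ^ k ≤ b 0 + M * (r / (1 - r)) := by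
  have hgeom : HasSum (fun k : ℕ => M * r ^ (k + 1)) (M * (r / (1 - r))) := by
    have := (hasSum_geometric_of_lt_one hr0 hr1).mul_left (M * r)
    simpa [pow_succ, div_eq_mul_inv, mul_assoc, mul_comm, mul_left_comm] using this
  rw [hs.tsum_eq_zero_add, pow_zero, mul_one]
  gcongr
  exact hasSum_le (fun k => mul_le_mul_of_nonneg_right (hM k) (by positivity))
    ((summable_nat_add_iff 1).mpr hs).hasSum hgeom

theorem bohr_classical (f : ℂ → ℂ) (a : ℕ → ℂ)
    (hf : ∀ z ∈ Metric.ball (0 : ℂ) 1, HasSum (fun k => a k * z ^ k) (f z))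
    (hb : ∀ z ∈ Metric.ball (0 : ℂ) 1, ‖f z‖ ≤ 1)
    (r : ℝ) (hr0 : 0 ≤ r) (hr : r ≤ 1 / 3) :
    ∑' k : ℕ, ‖a k‖ * r ^ k ≤ 1 := by
  have hf' : ∀ z ∈ ball (0 : ℂ) (1 : ℝ≥0), HasSum (fun k => a k * z ^ k) (f z) := by
    simpa using hf
  have hsum : Summable fun k => ‖a k‖ * r ^ k :=
    summable_norm_mul_pow_of_summable_on_ball (fun z hz => (hf' z hz).summable) hr0
      (by push_cast; linarith)
  have ha0 : ‖a 0‖ ≤ 1 := by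
    rw [← apply_zero_eq_of_hasSum one_pos hf']
    exact hb 0 (mem_ball_self one_pos)
  have hratio : r / (1 - r) ≤ 1 / 2 := by rw [div_le_iff₀ (by linarith)]; linarith
  calc ∑' k, ‖a k‖ * r ^ k ≤ ‖a 0‖ + (1 - ‖a 0‖ ^ 2) * (r / (1 - r)) :=
        tsum_mul_pow_le_of_forall_succ_le hr0 (by linarith) hsum
          fun k => norm_coeff_le_one_sub_norm_sq hf hb k.succ_ne_zero
    _ ≤ ‖a 0‖ + (1 - ‖a 0‖ ^ 2) * (1 / 2) := by gcongr; nlinarith [norm_nonneg (a 0)]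
    _ ≤ 1 := by nlinarith [sq_nonneg (1 - ‖a 0‖)]
end

section
/- If f is holomorphic on the unit polydisc in ℂⁿ with |f(z)| ≤ 1, then for every z in the polydisc, |f(z)| ≤ (|f(0)| + ‖z‖_∞)/(1 + |f(0)| ‖z‖_∞). -/
/-!
Compose `f` with the disc automorphism `mobius (f 0)`, which sends `f 0` to `0` and preserves the
closed unit disc. The Schwarz lemma holds on the unit ball of every complex normed space, in
particular on the polydisc with the sup norm, and yields `‖f z - a‖ ≤ ‖z‖ * ‖1 - conj a * f z‖`
for `a = f 0`. Together with `‖1 - conj a * b‖² - ‖b - a‖² = (1 - ‖a‖²)(1 - ‖b‖²)` and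
`‖1 - conj a * b‖ ≥ 1 - ‖a‖‖b‖` this becomes a quadratic inequality for `‖f z‖` whose larger root
is `(‖a‖ + ‖z‖) / (1 + ‖a‖ * ‖z‖)`.
-/

open Metric Set

open scoped ComplexConjugate

theorem le_add_div_one_add_mul_of_sq_mul_le {A r t : ℝ} (hA₀ : 0 ≤ A) (hA : A ≤ 1) (hr₀ : 0 ≤ r)
    (hr : r < 1) (h : (1 - A * t) ^ 2 * (1 - r ^ 2) ≤ (1 - A ^ 2) * (1 - t ^ 2)) :
    t ≤ (A + r) / (1 + A * r) := by
  have hfactor : ((1 + A * r) * t - (A + r)) * ((1 - A * r) * t - (A - r)) ≤ 0 := by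
    linear_combination h
  have hAr : 0 < 1 - A * r := by nlinarith
  rw [le_div_iff₀ (by positivity)]
  by_contra! hlt
  have hsmall : (1 - A * r) * t ≤ A - r := by nlinarith
  nlinarith [mul_lt_mul_of_pos_left hlt hAr, mul_le_mul_of_nonneg_left hsmall
    (by positivity : (0 : ℝ) ≤ 1 + A * r), mul_nonneg hr₀ (by nlinarith : (0 : ℝ) ≤ 1 - A ^ 2)]

namespace Complex

theorem sq_norm_one_sub_conj_mul_sub_sq_norm_sub (a b : ℂ) :
    ‖1 - conj a * b‖ ^ 2 - ‖b - a‖ ^ 2 = (1 - ‖a‖ ^ 2) * (1 - ‖b‖ ^ 2) := by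
  simp only [← normSq_eq_norm_sq, normSq_apply, sub_re, sub_im, mul_re, mul_im, one_re, one_im,
    conj_re, conj_im]
  ring

theorem norm_sub_le_norm_one_sub_conj_mul {a b : ℂ} (ha : ‖a‖ ≤ 1) (hb : ‖b‖ ≤ 1) :
    ‖b - a‖ ≤ ‖1 - conj a * b‖ := by
  have hid := sq_norm_one_sub_conj_mul_sub_sq_norm_sub a b
  have hprod : 0 ≤ (1 - ‖a‖ ^ 2) * (1 - ‖b‖ ^ 2) := by
    apply mul_nonneg <;> nlinarith [norm_nonneg a, norm_nonneg b]
  exact (pow_le_pow_iff_left₀ (norm_nonneg _) (norm_nonneg _) two_ne_zero).1 (by linarith)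

theorem one_sub_conj_mul_ne_zero {a b : ℂ} (ha : ‖a‖ < 1) (hb : ‖b‖ ≤ 1) :
    1 - conj a * b ≠ 0 := by
  refine sub_ne_zero.2 fun h ↦ ?_
  have : ‖conj a * b‖ < 1 := by
    rw [norm_mul, RCLike.norm_conj]
    nlinarith [norm_nonneg a, norm_nonneg b]
  simp [← h] at this

noncomputable def mobius (a z : ℂ) : ℂ := (z - a) / (1 - conj a * z)

theorem mobius_self (a : ℂ) : mobius a a = 0 := by
  simp [mobius]

theorem differentiableOn_mobius {a : ℂ} (ha : ‖a‖ < 1) :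
    DifferentiableOn ℂ (mobius a) (closedBall 0 1) := by
  refine (differentiableOn_id.sub_const a).div
    ((differentiableOn_const 1).sub ((differentiableOn_const _).mul differentiableOn_id)) ?_
  intro z hz
  exact one_sub_conj_mul_ne_zero ha (mem_closedBall_zero_iff.1 hz)

theorem norm_mobius_le_one {a z : ℂ} (ha : ‖a‖ ≤ 1) (hz : ‖z‖ ≤ 1) : ‖mobius a z‖ ≤ 1 := by
  rw [mobius, norm_div]
  exact div_le_one_of_le₀ (norm_sub_le_norm_one_sub_conj_mul ha hz) (norm_nonneg _)

theorem norm_le_of_norm_sub_le_mul_norm_one_sub_conj_mul {a b : ℂ} {r : ℝ} (ha : ‖a‖ ≤ 1)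
    (hb : ‖b‖ ≤ 1) (hr₀ : 0 ≤ r) (hr : r < 1) (h : ‖b - a‖ ≤ r * ‖1 - conj a * b‖) :
    ‖b‖ ≤ (‖a‖ + r) / (1 + ‖a‖ * r) := by
  refine le_add_div_one_add_mul_of_sq_mul_le (norm_nonneg a) ha hr₀ hr ?_
  have hrev : 1 - ‖a‖ * ‖b‖ ≤ ‖1 - conj a * b‖ := by
    simpa [norm_mul] using norm_sub_norm_le (1 : ℂ) (conj a * b)
  have hrev_sq : (1 - ‖a‖ * ‖b‖) ^ 2 ≤ ‖1 - conj a * b‖ ^ 2 :=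
    pow_le_pow_left₀ (by nlinarith [norm_nonneg a, norm_nonneg b]) hrev 2
  have h_sq : ‖b - a‖ ^ 2 ≤ r ^ 2 * ‖1 - conj a * b‖ ^ 2 := by
    rw [← mul_pow]
    exact pow_le_pow_left₀ (norm_nonneg _) h 2
  calc (1 - ‖a‖ * ‖b‖) ^ 2 * (1 - r ^ 2) ≤ ‖1 - conj a * b‖ ^ 2 * (1 - r ^ 2) :=
        mul_le_mul_of_nonneg_right hrev_sq (by nlinarith)
    _ ≤ (1 - ‖a‖ ^ 2) * (1 - ‖b‖ ^ 2) := by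
        linarith [sq_norm_one_sub_conj_mul_sub_sq_norm_sub a b]

theorem schwarz_pick_unitBall {E : Type*} [NormedAddCommGroup E] [NormedSpace ℂ E] {f : E → ℂ}
    (hf : DifferentiableOn ℂ f (ball 0 1)) (hmaps : MapsTo f (ball 0 1) (closedBall 0 1))
    {z : E} (hz : z ∈ ball 0 1) :
    ‖f z‖ ≤ (‖f 0‖ + ‖z‖) / (1 + ‖f 0‖ * ‖z‖) := by
  have hz₁ : ‖z‖ < 1 := mem_ball_zero_iff.1 hz
  have hf_le : ∀ x ∈ ball (0 : E) 1, ‖f x‖ ≤ 1 := fun x hx ↦ mem_closedBall_zero_iff.1 (hmaps hx)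
  have hf₀ : ‖f 0‖ ≤ 1 := hf_le 0 (mem_ball_self one_pos)
  rcases hf₀.eq_or_lt with hf₀ | hf₀
  · rw [hf₀, one_mul, div_self (by positivity)]
    exact hf_le z hz
  have hschwarz : ‖mobius (f 0) (f z)‖ ≤ ‖z‖ := by
    refine norm_le_norm_of_mapsTo_ball (f := mobius (f 0) ∘ f) ?_ ?_ (mobius_self _) hz₁
    · exact (differentiableOn_mobius hf₀).comp hf hmaps
    · exact fun x hx ↦ mem_closedBall_zero_iff.2 (norm_mobius_le_one hf₀.le (hf_le x hx))
  rw [mobius, norm_div, div_le_iff₀ (norm_pos_iff.2 (one_sub_conj_mul_ne_zero hf₀ (hf_le z hz)))]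
    at hschwarz
  exact norm_le_of_norm_sub_le_mul_norm_one_sub_conj_mul hf₀.le (hf_le z hz) (norm_nonneg z) hz₁
    hschwarz

end Complex

theorem schwarz_pick_polydisc (n : ℕ) (f : (Fin n → ℂ) → ℂ)
    (hf : DifferentiableOn ℂ f (Metric.ball (0 : Fin n → ℂ) 1))
    (hb : ∀ z ∈ Metric.ball (0 : Fin n → ℂ) 1, ‖f z‖ ≤ 1) :
    ∀ z ∈ Metric.ball (0 : Fin n → ℂ) 1,
      ‖f z‖ ≤ (‖f 0‖ + ‖z‖) / (1 + ‖f 0‖ * ‖z‖) :=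
  fun _ hz ↦ Complex.schwarz_pick_unitBall hf (fun x hx ↦ mem_closedBall_zero_iff.2 (hb x hx)) hz
end

section
/- Let R_{m,n,N} be the unique positive root in (0, 1/n) of 2(nr)^N(1+r^m) = (1-nr)(1-r^m). Then as N → ∞ with m, n fixed, R_{m,n,N} → 1 if n = 1 and R_{m,n,N} → 1/n if n ≥ 2. -/
theorem R_limit_N (m n : ℕ) (hm : 1 ≤ m) (hn : 1 ≤ n) (R : ℕ → ℝ)
    (hR : ∀ N, 1 ≤ N → R N ∈ Set.Ioo 0 (1 / (n:ℝ)) ∧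
      2 * ((n:ℝ) * R N) ^ N * (1 + R N ^ m) = (1 - (n:ℝ) * R N) * (1 - R N ^ m)) :
    (n = 1 → Filter.Tendsto R Filter.atTop (nhds 1)) ∧
    (2 ≤ n → Filter.Tendsto R Filter.atTop (nhds (1 / (n:ℝ)))) := by
  have hn0 : (0:ℝ) < n := by exact_mod_cast hn
  have hn1 : (1:ℝ) ≤ n := by exact_mod_cast hn
  have hx : Filter.Tendsto (fun N => (n:ℝ) * R N) Filter.atTop (nhds 1) := by
    rw [tendsto_order]
    constructor
    · intro a ha
      rcases le_or_gt a 0 with h0 | h0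
      · filter_upwards [Filter.eventually_ge_atTop 1] with N hN
        have h := (hR N hN).1.1
        nlinarith
      · have haN : Filter.Tendsto (fun N => (4:ℝ) * a ^ N) Filter.atTop (nhds 0) := by
          have := tendsto_pow_atTop_nhds_zero_of_lt_one h0.le ha
          simpa using this.const_mul (4:ℝ)
        have hev : ∀ᶠ N in Filter.atTop, 4 * a ^ N < (1 - a) ^ 2 :=
          haN.eventually_lt_const (pow_pos (by linarith) 2)
        filter_upwards [hev, Filter.eventually_ge_atTop 1] with N hN4 hN1
        by_contra hle
        push_neg at hle
        obtain ⟨⟨hR0, hR1⟩, heq⟩ := hR N hN1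
        set x := (n:ℝ) * R N with hxdef
        have hx0 : 0 < x := by positivity
        have hx1 : x < 1 := by
          have := (lt_div_iff₀ hn0).mp hR1
          nlinarith
        have hRx : R N ≤ x := by nlinarith
        have hR1' : R N ≤ 1 := le_trans hRx hx1.le
        have hRm : R N ^ m ≤ R N := by
          calc R N ^ m ≤ R N ^ 1 := pow_le_pow_of_le_one hR0.le hR1' hm
            _ = R N := pow_one _
        have hRm0 : 0 ≤ R N ^ m := by positivity
        have hxN : x ^ N ≤ a ^ N := pow_le_pow_left₀ hx0.le hle N
        have hxN0 : 0 ≤ x ^ N := by positivity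
        have h2 : (1 - a) ^ 2 ≤ (1 - x) * (1 - R N ^ m) := by nlinarith
        have h3 : 2 * x ^ N * (1 + R N ^ m) ≤ 4 * a ^ N := by nlinarith
        linarith [heq ▸ h2]
    · intro b hb
      filter_upwards [Filter.eventually_ge_atTop 1] with N hN
      have h1 := (hR N hN).1
      have : (n:ℝ) * R N < 1 := by
        have := (lt_div_iff₀ hn0).mp h1.2
        nlinarith
      linarith
  have hRt : Filter.Tendsto R Filter.atTop (nhds (1 / (n:ℝ))) := by
    have h := hx.div_const (n:ℝ)
    have heq : (fun N => (n:ℝ) * R N / n) = R := by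
      funext N; field_simp
    rwa [heq] at h
  constructor
  · intro h1
    have : (1 : ℝ) / (n:ℝ) = 1 := by rw [h1]; norm_num
    rwa [this] at hRt
  · intro _; exact hRt
end
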